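/- The smallest number of turns in a Hamiltonian path of the s×s grid graph is 2s − 2. -/

import Mathlib

open SimpleGraph

abbrev Cell : Type := ℤ × ℤ

def sqBoard (n : ℕ) : Set Cell :=
  {a | 0 ≤ a.1 ∧ a.1 ≤ (n : ℤ) - 1 ∧ 0 ≤ a.2 ∧ a.2 ≤ (n : ℤ) - 1}

/-- The king graph on the standard `n × n` board. -/
def kingGraph (n : ℕ) : SimpleGraph Cell where
  Adj a b := a ≠ b ∧ a ∈ sqBoard n ∧ b ∈ sqBoard n ∧ |a.1 - b.1| ≤ 1 ∧ |a.2 - b.2| ≤ 1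
  symm := by
    constructor
    rintro a b ⟨h1, h2, h3, h4, h5⟩
    exact ⟨h1.symm, h3, h2, by rwa [abs_sub_comm], by rwa [abs_sub_comm]⟩
  loopless := by constructor; rintro a ⟨h, -⟩; exact h rfl

def board (m n : ℕ) : Set Cell :=
  {a | 0 ≤ a.1 ∧ a.1 ≤ (n : ℤ) - 1 ∧ 0 ≤ a.2 ∧ a.2 ≤ (m : ℤ) - 1}

/-- The grid graph on the standard `m × n` board (m rows, n columns). -/
def gridGraph (m n : ℕ) : SimpleGraph Cell where
  Adj a b := a ∈ board m n ∧ b ∈ board m n ∧ |a.1 - b.1| + |a.2 - b.2| = 1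
  symm := by
    constructor
    rintro a b ⟨h1, h2, h3⟩
    refine ⟨h2, h1, ?_⟩
    rw [abs_sub_comm b.1 a.1, abs_sub_comm b.2 a.2]
    exact h3
  loopless := by constructor; rintro a ⟨-, -, h⟩; simp at h

/-- A snake path: a path which is an induced subgraph. -/
def IsSnake {V : Type*} (G : SimpleGraph V) {a b : V} (p : G.Walk a b) : Prop :=
  p.IsPath ∧ ∀ u ∈ p.support, ∀ v ∈ p.support, G.Adj u v → s(u, v) ∈ p.edges

/-- The walk `p` makes a turn at `c` : it traverses a horizontal and a vertical edge at `c`. -/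
def TurnsAt {G : SimpleGraph Cell} {a b : Cell} (p : G.Walk a b) (c : Cell) : Prop :=
  ∃ u v : Cell, u ≠ v ∧ s(u, c) ∈ p.edges ∧ s(c, v) ∈ p.edges ∧
    ((u.2 = c.2 ∧ v.1 = c.1) ∨ (u.1 = c.1 ∧ v.2 = c.2))

noncomputable def turnCount {G : SimpleGraph Cell} {a b : Cell} (p : G.Walk a b) : ℕ :=
  Set.ncard {c : Cell | TurnsAt p c}

/-- The walk `p` goes straight through `c`. -/
def GoesStraight {G : SimpleGraph Cell} {a b : Cell} (p : G.Walk a b) (c : Cell) : Prop :=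
  ∃ u v : Cell, u ≠ v ∧ s(u, c) ∈ p.edges ∧ s(c, v) ∈ p.edges ∧
    ((u.2 = c.2 ∧ v.2 = c.2) ∨ (u.1 = c.1 ∧ v.1 = c.1))

/-- `p` is a Hamiltonian path on the vertex set `S`. -/
def IsHamOn {V : Type*} {G : SimpleGraph V} (S : Set V) {a b : V} (p : G.Walk a b) : Prop :=
  p.IsPath ∧ ∀ v, v ∈ S ↔ v ∈ p.support

/-- The 4-cycle `a'—a''—b'—b''—a'` of the grid graph is free relative to `p`. -/
def FreeCycle {k : ℕ} {a b : Cell} (p : (gridGraph k k).Walk a b)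
    (a' a'' b' b'' : Cell) : Prop :=
  (gridGraph k k).Adj a' a'' ∧ (gridGraph k k).Adj a'' b' ∧
  (gridGraph k k).Adj b' b'' ∧ (gridGraph k k).Adj b'' a' ∧
  s(a', a'') ∈ p.edges ∧ s(a'', b') ∉ p.edges ∧
  s(b', b'') ∉ p.edges ∧ s(b'', a') ∉ p.edges ∧
  GoesStraight p a' ∧ GoesStraight p a'' ∧ TurnsAt p b' ∧ TurnsAt p b''

/-!
In a row carrying a horizontal edge of a Hamiltonian path, the leftmost and the rightmost cells
incident to such an edge are each a turn or an end of the path: their only horizontal path edge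
points inwards, so a second path edge there must be vertical. If every row carries a horizontal
edge this yields `2s` distinct turns or ends, hence at least `2s - 2` turns. Otherwise some row
carries none; its cells are left vertically, so every column carries a vertical edge and the same
count applies to the transposed path. The snake path, sweeping the rows alternately left to right
and right to left, turns only at the two ends of each of its `s - 1` vertical steps.
-/

open Finset

namespace SimpleGraph.Walk

variable {V V' : Type*} {G : SimpleGraph V} {G' : SimpleGraph V'} {a b c u v : V}

theorem mk_mem_edges_map_iff {f : G →g G'} (hf : Function.Injective f) {p : G.Walk a b} :
    s(f u, f v) ∈ (p.map f).edges ↔ s(u, v) ∈ p.edges := by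
  rw [← mem_edgeSet, edgeSet_map, ← Sym2.map_mk, (Sym2.map.injective hf).mem_set_image,
    mem_edgeSet]

theorem IsPath.exists_ne_mem_edges {p : G.Walk a b} (hp : p.IsPath) (hca : c ≠ a) (hcb : c ≠ b)
    (hu : s(u, c) ∈ p.edges) : ∃ w, w ≠ u ∧ s(w, c) ∈ p.edges := by
  obtain ⟨i, rfl, hi⟩ := mem_support_iff_exists_getVert.mp (p.snd_mem_support_of_mem_edges hu)
  have hi₀ : i ≠ 0 := by rintro rfl; simp at hca
  have hil : i < p.length := lt_of_le_of_ne hi (by rintro rfl; simp at hcb)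
  obtain ⟨x, y, hxy, hnbr⟩ :=
    Set.ncard_eq_two.mp (hp.ncard_neighborSet_toSubgraph_internal_eq_two hi₀ hil)
  have mem_nbr : ∀ w, w ∈ p.toSubgraph.neighborSet (p.getVert i) ↔ s(w, p.getVert i) ∈ p.edges :=
    fun w => by rw [Subgraph.mem_neighborSet, adj_toSubgraph_iff_mem_edges, Sym2.eq_swap]
  have hu' := (mem_nbr u).mpr hu
  rw [hnbr, Set.mem_insert_iff, Set.mem_singleton_iff] at hu'
  obtain ⟨w, hwu, hw⟩ : ∃ w, w ≠ u ∧ w ∈ ({x, y} : Set V) := by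
    rcases hu' with rfl | rfl
    exacts [⟨y, hxy.symm, by simp⟩, ⟨x, hxy, by simp⟩]
  exact ⟨w, hwu, (mem_nbr w).mp (hnbr ▸ hw)⟩

end SimpleGraph.Walk

section Grid

variable {m n : ℕ} {a b c u : Cell}

theorem gridGraph_adj_iff {u v : Cell} :
    (gridGraph m n).Adj u v ↔ u ∈ board m n ∧ v ∈ board m n ∧
      (u.2 = v.2 ∧ (u.1 = v.1 + 1 ∨ v.1 = u.1 + 1) ∨
        u.1 = v.1 ∧ (u.2 = v.2 + 1 ∨ v.2 = u.2 + 1)) := by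
  refine and_congr_right fun _ => and_congr_right fun _ => ?_
  rcases abs_cases (u.1 - v.1) with ⟨h₁, h₁'⟩ | ⟨h₁, h₁'⟩ <;>
    rcases abs_cases (u.2 - v.2) with ⟨h₂, h₂'⟩ | ⟨h₂, h₂'⟩ <;> rw [h₁, h₂] <;> omega

def gridTransposeHom (m n : ℕ) : gridGraph m n →g gridGraph n m where
  toFun := Prod.swap
  map_rel' h := by
    rw [gridGraph_adj_iff] at h ⊢
    simp only [board, Set.mem_ofPred_eq, Prod.fst_swap, Prod.snd_swap] at h ⊢
    omega

@[simp]
theorem gridTransposeHom_apply (c : Cell) : gridTransposeHom m n c = c.swap := rfl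

theorem mk_mem_edges_map_transpose_iff {p : (gridGraph m n).Walk a b} {u v : Cell} :
    s(u, v) ∈ (p.map (gridTransposeHom m n)).edges ↔ s(u.swap, v.swap) ∈ p.edges := by
  simpa using Walk.mk_mem_edges_map_iff (f := gridTransposeHom m n) Prod.swap_injective
    (p := p) (u := u.swap) (v := v.swap)

theorem finite_setOf_turnsAt {G : SimpleGraph Cell} (p : G.Walk a b) :
    {c | TurnsAt p c}.Finite :=
  p.support.finite_toSet.subset fun _ ⟨_, _, _, hu, _⟩ => p.snd_mem_support_of_mem_edges hu

theorem TurnsAt.exists_vertical_edge {G : SimpleGraph Cell} {p : G.Walk a b} (h : TurnsAt p c) :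
    ∃ d, s(c, d) ∈ p.edges ∧ d.1 = c.1 := by
  obtain ⟨u, v, -, hu, hv, ⟨-, hv₁⟩ | ⟨hu₁, -⟩⟩ := h
  exacts [⟨v, hv, hv₁⟩, ⟨u, Sym2.eq_swap ▸ hu, hu₁⟩]

theorem turnsAt_or_eq_of_unique_horizontal {p : (gridGraph m n).Walk a b} (hp : p.IsPath)
    (hu : s(u, c) ∈ p.edges) (hu₂ : u.2 = c.2)
    (huniq : ∀ w, s(w, c) ∈ p.edges → w.2 = c.2 → w = u) :
    TurnsAt p c ∨ c = a ∨ c = b := by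
  by_contra! h
  obtain ⟨hturn, hca, hcb⟩ := h
  obtain ⟨w, hwu, hw⟩ := hp.exists_ne_mem_edges hca hcb hu
  have hw₂ : w.2 ≠ c.2 := fun h => hwu (huniq w hw h)
  have hw₁ : w.1 = c.1 := by
    have := (gridGraph_adj_iff.mp (p.adj_of_mem_edges hw)).2.2
    omega
  exact hturn ⟨u, w, hwu.symm, hu, Sym2.eq_swap ▸ hw, .inl ⟨hu₂, hw₁⟩⟩

theorem turnsAt_or_eq_of_row_end {p : (gridGraph m n).Walk a b} (hp : p.IsPath) {x x' r d : ℤ}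
    (hd : d = 1 ∨ d = -1) (hx : s((x', r), (x, r)) ∈ p.edges)
    (hend : ∀ y, s((x - d, r), (y, r)) ∉ p.edges) :
    TurnsAt p (x, r) ∨ (x, r) = a ∨ (x, r) = b := by
  have inwards : ∀ w : Cell, s(w, (x, r)) ∈ p.edges → w.2 = r → w = (x + d, r) := by
    rintro ⟨y, r'⟩ hy (hr : r' = r)
    rw [hr] at hy ⊢
    have hyd : y ≠ x - d := by
      rintro rfl
      exact hend x hy
    have := (gridGraph_adj_iff.mp (p.adj_of_mem_edges hy)).2.2
    rw [Prod.mk.injEq]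
    omega
  exact turnsAt_or_eq_of_unique_horizontal hp hx rfl fun w hw hw₂ =>
    (inwards w hw hw₂).trans (inwards _ hx rfl).symm

theorem exists_turnsAt_or_eq_of_row {p : (gridGraph m n).Walk a b} (hp : p.IsPath) {r x₀ x₀' : ℤ}
    (h₀ : s((x₀, r), (x₀', r)) ∈ p.edges) :
    ∃ x₁ x₂ : ℤ, x₁ < x₂ ∧ (TurnsAt p (x₁, r) ∨ (x₁, r) = a ∨ (x₁, r) = b) ∧
      (TurnsAt p (x₂, r) ∨ (x₂, r) = a ∨ (x₂, r) = b) := by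
  have adj : ∀ {x x'}, s((x, r), (x', r)) ∈ p.edges →
      (0 ≤ x ∧ x ≤ n - 1) ∧ (x' = x + 1 ∨ x = x' + 1) := by
    intro x x' h
    obtain ⟨⟨hx, hxn, -⟩, -, h'⟩ := gridGraph_adj_iff.mp (p.adj_of_mem_edges h)
    exact ⟨⟨hx, hxn⟩, by omega⟩
  obtain ⟨x₁, ⟨x₁', hx₁⟩, hmin⟩ := Int.exists_least_of_bdd
    (P := fun x => ∃ x', s((x, r), (x', r)) ∈ p.edges) ⟨0, fun _ ⟨_, h⟩ => (adj h).1.1⟩ ⟨x₀, _, h₀⟩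
  obtain ⟨x₂, ⟨x₂', hx₂⟩, hmax⟩ := Int.exists_greatest_of_bdd
    (P := fun x => ∃ x', s((x, r), (x', r)) ∈ p.edges) ⟨n - 1, fun _ ⟨_, h⟩ => (adj h).1.2⟩
      ⟨x₀, _, h₀⟩
  have hx₁' : s((x₁', r), (x₁, r)) ∈ p.edges := by rwa [Sym2.eq_swap]
  have hx₂' : s((x₂', r), (x₂, r)) ∈ p.edges := by rwa [Sym2.eq_swap]
  refine ⟨x₁, x₂, ?_, turnsAt_or_eq_of_row_end hp (.inl rfl) hx₁' fun y h => ?_,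
    turnsAt_or_eq_of_row_end hp (.inr rfl) hx₂' fun y h => ?_⟩
  · have := (adj hx₁).2
    have := hmin x₁' ⟨_, hx₁'⟩
    have := hmax x₁' ⟨_, hx₁'⟩
    omega
  · have := hmin _ ⟨y, h⟩
    omega
  · have := hmax _ ⟨y, h⟩
    omega

theorem two_mul_le_turnCount_add_two {p : (gridGraph m n).Walk a b} (hp : p.IsPath)
    (hrows : ∀ r : ℤ, 0 ≤ r → r < m → ∃ x x' : ℤ, s((x, r), (x', r)) ∈ p.edges) :
    2 * m ≤ turnCount p + 2 := by
  set T := (finite_setOf_turnsAt p).toFinset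
  set E : Finset Cell := T ∪ {a, b}
  have mem_E : ∀ c, TurnsAt p c ∨ c = a ∨ c = b → c ∈ E := by
    intro c hc
    simp only [E, T, mem_union, Set.Finite.mem_toFinset, Set.mem_ofPred_eq, mem_insert,
      mem_singleton]
    tauto
  have two_le_row : ∀ r ∈ Ico (0 : ℤ) m, 2 ≤ #{c ∈ E | c.2 = r} := by
    intro r hr
    rw [mem_Ico] at hr
    obtain ⟨x, x', hx⟩ := hrows r hr.1 hr.2
    obtain ⟨x₁, x₂, hlt, h₁, h₂⟩ := exists_turnsAt_or_eq_of_row hp hx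
    refine one_lt_card.mpr ⟨(x₁, r), mem_filter.mpr ⟨mem_E _ h₁, rfl⟩,
      (x₂, r), mem_filter.mpr ⟨mem_E _ h₂, rfl⟩, fun h => ?_⟩
    rw [Prod.mk.injEq] at h
    omega
  calc 2 * m = ∑ r ∈ Ico (0 : ℤ) m, 2 := by simp [mul_comm]
    _ ≤ ∑ r ∈ Ico (0 : ℤ) m, #{c ∈ E | c.2 = r} := sum_le_sum two_le_row
    _ ≤ #E := (sum_card_fiberwise_eq_card_filter _ _ _).trans_le (card_filter_le _ _)
    _ ≤ #T + #{a, b} := card_union_le _ _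
    _ ≤ turnCount p + 2 := by
      rw [turnCount, Set.ncard_eq_toFinset_card _ (finite_setOf_turnsAt p)]
      exact Nat.add_le_add_left card_le_two _

theorem TurnsAt.of_map_transpose {p : (gridGraph m n).Walk a b}
    (h : TurnsAt (p.map (gridTransposeHom m n)) c) : TurnsAt p c.swap := by
  obtain ⟨u, v, huv, hu, hv, hdir⟩ := h
  refine ⟨u.swap, v.swap, fun e => huv (Prod.swap_injective e),
    mk_mem_edges_map_transpose_iff.mp hu, mk_mem_edges_map_transpose_iff.mp hv, ?_⟩
  simp only [Prod.fst_swap, Prod.snd_swap]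
  tauto

theorem turnCount_map_transpose_le {p : (gridGraph m n).Walk a b} :
    turnCount (p.map (gridTransposeHom m n)) ≤ turnCount p :=
  calc turnCount (p.map (gridTransposeHom m n))
      ≤ (Prod.swap '' {c | TurnsAt p c}).ncard :=
        Set.ncard_le_ncard (fun c hc => ⟨c.swap, hc.of_map_transpose, c.swap_swap⟩)
          ((finite_setOf_turnsAt p).image _)
    _ = turnCount p := Set.ncard_image_of_injective _ Prod.swap_injective

theorem two_mul_min_sub_two_le_turnCount {p : (gridGraph m n).Walk a b}
    (hp : IsHamOn (board m n) p) : 2 * min m n - 2 ≤ turnCount p := by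
  by_cases hrows : ∀ r : ℤ, 0 ≤ r → r < m → ∃ x x' : ℤ, s((x, r), (x', r)) ∈ p.edges
  · have := two_mul_le_turnCount_add_two hp.1 hrows
    omega
  push Not at hrows
  obtain ⟨r₀, hr₀, hr₀m, hno⟩ := hrows
  rcases lt_or_ge n 2 with hn | hn
  · omega
  have hnil : ¬ p.Nil := fun hnil => by
    have h₀ := (hp.2 (0, r₀)).mp ⟨le_rfl, by omega, hr₀, by omega⟩
    have h₁ := (hp.2 (1, r₀)).mp ⟨zero_le_one, by omega, hr₀, by omega⟩
    rw [Walk.nil_iff_support_eq.mp hnil, List.mem_singleton] at h₀ h₁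
    simpa using h₀.trans h₁.symm
  have hcols : ∀ x : ℤ, 0 ≤ x → x < n →
      ∃ y y' : ℤ, s((y, x), (y', x)) ∈ (p.map (gridTransposeHom m n)).edges := by
    intro x hx hxn
    obtain ⟨e, he, hce⟩ := (Walk.mem_support_iff_exists_mem_edges_of_not_nil hnil).mp
      ((hp.2 (x, r₀)).mp ⟨hx, by omega, hr₀, by omega⟩)
    obtain ⟨⟨x', y'⟩, rfl⟩ := Sym2.mem_iff_exists.mp hce
    have hy' : y' ≠ r₀ := fun h => hno x x' (h ▸ he)
    have hx' : x' = x := by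
      have := (gridGraph_adj_iff.mp (p.adj_of_mem_edges he)).2.2
      simp only at this
      omega
    subst hx'
    exact ⟨r₀, y', mk_mem_edges_map_transpose_iff.mpr he⟩
  have hq := hp.1.map (f := gridTransposeHom m n) Prod.swap_injective
  have := two_mul_le_turnCount_add_two hq hcols
  have := turnCount_map_transpose_le (p := p)
  omega

end Grid

theorem Nat.exists_eq_mul_add_of_pos {n : ℕ} (hn : 0 < n) (i : ℕ) :
    ∃ q r, r < n ∧ i = n * q + r :=
  ⟨i / n, i % n, Nat.mod_lt i hn, (Nat.div_add_mod i n).symm⟩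

section Snake

variable {n : ℕ}

def snakeCell (n i : ℕ) : Cell :=
  (((if i / n % 2 = 0 then i % n else n - 1 - i % n : ℕ) : ℤ), ((i / n : ℕ) : ℤ))

def snakeCells (n : ℕ) : List Cell := (List.range (n * n)).map (snakeCell n)

theorem snakeCell_mul_add {q r : ℕ} (hr : r < n) :
    snakeCell n (n * q + r) = (((if q % 2 = 0 then r else n - 1 - r : ℕ) : ℤ), (q : ℤ)) := by
  have hn : 0 < n := by omega
  rw [snakeCell, Nat.mul_add_div hn, Nat.mul_add_mod, Nat.div_eq_of_lt hr, Nat.mod_eq_of_lt hr,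
    add_zero]

theorem snakeCell_injective (hn : 0 < n) : Function.Injective (snakeCell n) := by
  intro i j h
  obtain ⟨q, r, hr, rfl⟩ := Nat.exists_eq_mul_add_of_pos hn i
  obtain ⟨q', r', hr', rfl⟩ := Nat.exists_eq_mul_add_of_pos hn j
  rw [snakeCell_mul_add hr, snakeCell_mul_add hr', Prod.mk.injEq] at h
  obtain ⟨h₁, h₂⟩ := h
  obtain rfl : q = q' := by exact_mod_cast h₂
  split_ifs at h₁ <;> omega

theorem snakeCell_mem_board {i : ℕ} (hi : i < n * n) : snakeCell n i ∈ board n n := by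
  have hn : 0 < n := Nat.pos_of_ne_zero (by rintro rfl; simp at hi)
  obtain ⟨q, r, hr, rfl⟩ := Nat.exists_eq_mul_add_of_pos hn i
  have hq : q < n := by nlinarith
  rw [snakeCell_mul_add hr]
  simp only [board, Set.mem_ofPred_eq]
  split_ifs <;> omega

theorem exists_snakeCell_eq {c : Cell} (hc : c ∈ board n n) :
    ∃ i < n * n, snakeCell n i = c := by
  obtain ⟨x, y⟩ := c
  obtain ⟨hx, hxn, hy, hyn⟩ := hc
  lift x to ℕ using hx
  lift y to ℕ using hy
  have hr : (if y % 2 = 0 then x else n - 1 - x) < n := by split_ifs <;> omega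
  refine ⟨n * y + (if y % 2 = 0 then x else n - 1 - x), by nlinarith, ?_⟩
  rw [snakeCell_mul_add hr, Prod.mk.injEq]
  split_ifs <;> omega

theorem snakeCell_succ (hn : 0 < n) (i : ℕ) :
    ((snakeCell n (i + 1)).2 = (snakeCell n i).2 ∧
        ((snakeCell n (i + 1)).1 = (snakeCell n i).1 + 1 ∨
          (snakeCell n i).1 = (snakeCell n (i + 1)).1 + 1)) ∨
      (i % n = n - 1 ∧ (snakeCell n (i + 1)).1 = (snakeCell n i).1 ∧
        (snakeCell n (i + 1)).2 = (snakeCell n i).2 + 1) := by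
  obtain ⟨q, r, hr, rfl⟩ := Nat.exists_eq_mul_add_of_pos hn i
  rcases Nat.lt_or_ge (r + 1) n with hr' | hr'
  · rw [add_assoc, snakeCell_mul_add hr', snakeCell_mul_add hr]
    left
    split_ifs <;> omega
  · rw [show n * q + r + 1 = n * (q + 1) + 0 by rw [Nat.mul_succ]; omega,
      snakeCell_mul_add hn, snakeCell_mul_add hr, Nat.mul_add_mod, Nat.mod_eq_of_lt hr]
    right
    split_ifs <;> omega

theorem gridGraph_adj_snakeCell_succ {i : ℕ} (hi : i + 1 < n * n) :
    (gridGraph n n).Adj (snakeCell n i) (snakeCell n (i + 1)) := by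
  have hn : 0 < n := Nat.pos_of_ne_zero (by rintro rfl; simp at hi)
  refine gridGraph_adj_iff.mpr ⟨snakeCell_mem_board (by omega), snakeCell_mem_board hi, ?_⟩
  rcases snakeCell_succ hn i with h | h <;> omega

theorem exists_walk_support_eq_snakeCells (hn : 0 < n) :
    ∃ (a b : Cell) (p : (gridGraph n n).Walk a b), p.support = snakeCells n := by
  have hne : snakeCells n ≠ [] := by simp [snakeCells]; positivity
  have hchain : (snakeCells n).IsChain (gridGraph n n).Adj := by
    rw [snakeCells, List.isChain_map, List.isChain_range]
    intro i hi
    exact gridGraph_adj_snakeCell_succ (by omega)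
  exact ⟨_, _, Walk.ofSupport _ hne hchain, Walk.support_ofSupport hne hchain⟩

variable {a b : Cell} {p : (gridGraph n n).Walk a b}

theorem isHamOn_of_support_eq_snakeCells (hn : 0 < n) (hp : p.support = snakeCells n) :
    IsHamOn (board n n) p := by
  refine ⟨Walk.IsPath.mk' ?_, fun c => ?_⟩
  · rw [hp, snakeCells]
    exact List.nodup_range.map (snakeCell_injective hn)
  · rw [hp, snakeCells, List.mem_map]
    refine ⟨fun hc => ?_, ?_⟩
    · obtain ⟨i, hi, rfl⟩ := exists_snakeCell_eq hc
      exact ⟨i, List.mem_range.mpr hi, rfl⟩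
    · rintro ⟨i, hi, rfl⟩
      exact snakeCell_mem_board (List.mem_range.mp hi)

theorem getVert_eq_snakeCell (hp : p.support = snakeCells n) {i : ℕ} (hi : i ≤ p.length) :
    p.getVert i = snakeCell n i := by
  rw [p.getVert_eq_support_getElem hi]
  simp [hp, snakeCells]

theorem exists_snakeCell_eq_of_turnsAt (hn : 0 < n) (hp : p.support = snakeCells n) {c : Cell}
    (hc : TurnsAt p c) : ∃ k < n - 1, ∃ e < 2, snakeCell n (n * k + (n - 1) + e) = c := by
  have hlen : p.length + 1 = n * n := by simpa [snakeCells] using congrArg List.length hp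
  obtain ⟨d, hd, hd₁⟩ := hc.exists_vertical_edge
  obtain ⟨i, hi, he⟩ := p.mk_mem_edges_iff_exists.mp hd
  rw [getVert_eq_snakeCell hp hi.le, getVert_eq_snakeCell (i := i + 1) hp hi] at he
  have hends := Sym2.eq_iff.mp he
  have hmod : i % n = n - 1 := by
    rcases hends with ⟨rfl, rfl⟩ | ⟨rfl, rfl⟩ <;> rcases snakeCell_succ hn i with h | h <;> omega
  have hi_eq : i = n * (i / n) + (n - 1) := by
    have := Nat.div_add_mod i n
    omega
  have hq : i / n < n - 1 := by
    have : n * (i / n + 1) < n * n := by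
      rw [mul_add, mul_one]
      omega
    have := Nat.lt_of_mul_lt_mul_left this
    omega
  refine ⟨i / n, hq, ?_⟩
  rw [← hi_eq]
  rcases hends with ⟨h, -⟩ | ⟨-, h⟩
  exacts [⟨0, two_pos, h⟩, ⟨1, one_lt_two, h⟩]

theorem turnCount_le_of_support_eq_snakeCells (hn : 0 < n) (hp : p.support = snakeCells n) :
    turnCount p ≤ 2 * n - 2 := by
  set F : Finset Cell :=
    (range (n - 1) ×ˢ range 2).image fun ke => snakeCell n (n * ke.1 + (n - 1) + ke.2)
  have hsub : {c | TurnsAt p c} ⊆ F := by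
    intro c hc
    obtain ⟨k, hk, e, he, rfl⟩ := exists_snakeCell_eq_of_turnsAt hn hp hc
    simp only [F, coe_image, coe_product, coe_range]
    exact ⟨(k, e), ⟨hk, he⟩, rfl⟩
  calc turnCount p ≤ (F : Set Cell).ncard := Set.ncard_le_ncard hsub F.finite_toSet
    _ = #F := Set.ncard_coe_finset F
    _ ≤ #(range (n - 1) ×ˢ range 2) := card_image_le
    _ = 2 * n - 2 := by
      rw [card_product, card_range, card_range]
      omega

end Snake

/-- the smallest number of turns in a Hamiltonian path of the s×s grid
graph is 2s − 2. -/
theorem grid_min_turns (s : ℕ) (hs : 0 < s) :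
    IsLeast {t : ℕ | ∃ (a b : Cell) (p : (gridGraph s s).Walk a b),
      IsHamOn (sqBoard s) p ∧ turnCount p = t} (2 * s - 2) := by
  refine ⟨?_, ?_⟩
  · obtain ⟨a, b, p, hp⟩ := exists_walk_support_eq_snakeCells hs
    have hham := isHamOn_of_support_eq_snakeCells hs hp
    refine ⟨a, b, p, hham, le_antisymm (turnCount_le_of_support_eq_snakeCells hs hp) ?_⟩
    simpa using two_mul_min_sub_two_le_turnCount hham
  · rintro t ⟨a, b, p, hp, rfl⟩
    simpa using two_mul_min_sub_two_le_turnCount (m := s) (n := s) hp
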